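/- Let E ∈ ℂ not be an eigenvalue of h. Then the following identity of 2m×2m matrices (written in m×m blocks) holds: [[0, −B_n⁻¹], [g_{n,1}, g_{n,n}]] = T(E) · [[g_{1,1}, g_{1,n}], [−C_1⁻¹, 0]]. -/

import Mathlib

/-!
Columns `1` and `n` of `g = (h - E)⁻¹` solve the three-term recurrence
`C_k ψ_{k-1} + (A_k - E) ψ_k + B_k ψ_{k+1} = δ_{k j}` with `ψ_0 = ψ_{n+1} = 0`.
Changing the boundary value of column `1` to `ψ_0 = -C_1⁻¹`, and that of column `n` to
`ψ_{n+1} = -B_n⁻¹`, absorbs the source term, so both become solutions of the homogeneous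
recurrence on the whole chain. The transfer matrix maps `(ψ_1, ψ_0)` to `(ψ_{n+1}, ψ_n)` for
such solutions, and reading this off for the two columns at once is the claimed identity.
-/

open Matrix

noncomputable def tstep {m : ℕ} (A B C : Matrix (Fin m) (Fin m) ℂ) (E : ℂ) :
    Matrix (Fin m ⊕ Fin m) (Fin m ⊕ Fin m) ℂ :=
  Matrix.fromBlocks (B⁻¹ * (E • 1 - A)) (-(B⁻¹ * C)) 1 0

/-- The transfer matrix `T(E) = t_n(E) ⋯ t_1(E)` (0-indexed: `t_{n-1} ⋯ t_0`). -/
noncomputable def transfer {n m : ℕ} (A B C : Fin n → Matrix (Fin m) (Fin m) ℂ) (E : ℂ) :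
    Matrix (Fin m ⊕ Fin m) (Fin m ⊕ Fin m) ℂ :=
  ((List.ofFn fun k : Fin n => tstep (A k) (B k) (C k) E).reverse).prod

/-- The block tridiagonal matrix `h` of the open chain:
diagonal blocks `A_k`, upper blocks `B_k`, lower blocks `C_k`. -/
noncomputable def hopen {n m : ℕ} (A B C : Fin n → Matrix (Fin m) (Fin m) ℂ) :
    Matrix (Fin n × Fin m) (Fin n × Fin m) ℂ :=
  fun p q =>
    (if p.1 = q.1 then A p.1 p.2 q.2 else 0)
    + (if (p.1 : ℕ) + 1 = (q.1 : ℕ) then B p.1 p.2 q.2 else 0)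
    + (if (q.1 : ℕ) + 1 = (p.1 : ℕ) then C p.1 p.2 q.2 else 0)

/-- The `(i,j)` block (of size `m × m`) of an `(nm) × (nm)` matrix. -/
def blk {n m : ℕ} (M : Matrix (Fin n × Fin m) (Fin n × Fin m) ℂ) (i j : Fin n) :
    Matrix (Fin m) (Fin m) ℂ :=
  fun p q => M (i, p) (j, q)

theorem Matrix.prod_reverse_ofFn_mul_eq_last {l o R : Type*} [Fintype l] [DecidableEq l]
    [Semiring R] {n : ℕ} (t : Fin n → Matrix l l R) (w : Fin (n + 1) → Matrix l o R)
    (h : ∀ i : Fin n, w i.succ = t i * w i.castSucc) :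
    (List.ofFn t).reverse.prod * w 0 = w (Fin.last n) := by
  induction n with
  | zero => simp
  | succ n ih =>
    have h0 : t 0 * w 0 = w (Fin.succ 0) := (h 0).symm
    rw [List.ofFn_succ, List.reverse_cons, List.prod_append, List.prod_singleton,
      Matrix.mul_assoc, h0]
    exact ih _ (w ∘ Fin.succ) fun i => h i.succ

section Transfer

variable {m : ℕ} {ι : Type*}

/-- Sites are 0-indexed and sequences are indexed by `ℤ`: the boundary sites are `-1` and `n`. -/
def blockTridiagApply {n : ℕ} (A B C : Fin n → Matrix (Fin m) (Fin m) ℂ) (E : ℂ)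
    (x : ℤ → Matrix (Fin m) ι ℂ) (k : Fin n) : Matrix (Fin m) ι ℂ :=
  C k * x (k - 1) + (A k - E • 1) * x k + B k * x (k + 1)

lemma tstep_mul_fromRows {A B C : Matrix (Fin m) (Fin m) ℂ} (hB : IsUnit B) {E : ℂ}
    {u v w : Matrix (Fin m) ι ℂ} (h : C * u + (A - E • 1) * v + B * w = 0) :
    tstep A B C E * fromRows v u = fromRows w v := by
  have hw : B * w = (E • 1 - A) * v - C * u := by
    rw [eq_neg_of_add_eq_zero_right h, ← neg_sub A, Matrix.neg_mul]; abel
  have hBB : B⁻¹ * B = 1 := nonsing_inv_mul B ((isUnit_iff_isUnit_det B).mp hB)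
  rw [tstep, fromBlocks_mul_fromRows, Matrix.one_mul, Matrix.zero_mul, add_zero]
  congr 1
  calc B⁻¹ * (E • 1 - A) * v + -(B⁻¹ * C) * u = B⁻¹ * (B * w) := by
        rw [hw, Matrix.mul_sub B⁻¹ ((E • 1 - A) * v), Matrix.neg_mul, ← sub_eq_add_neg,
          Matrix.mul_assoc, Matrix.mul_assoc]
    _ = w := by rw [← Matrix.mul_assoc, hBB, Matrix.one_mul]

theorem transfer_mul_fromRows {n : ℕ} {A B C : Fin n → Matrix (Fin m) (Fin m) ℂ}
    (hB : ∀ k, IsUnit (B k)) {E : ℂ} {x : ℤ → Matrix (Fin m) ι ℂ}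
    (hx : ∀ k, blockTridiagApply A B C E x k = 0) :
    transfer A B C E * fromRows (x 0) (x (-1)) = fromRows (x n) (x (n - 1)) := by
  have := prod_reverse_ofFn_mul_eq_last _ (fun i : Fin (n + 1) => fromRows (x i) (x (i - 1)))
    fun k => by
      simpa [add_sub_cancel_right] using (tstep_mul_fromRows (hB k) (hx k)).symm
  simpa [transfer] using this

end Transfer

lemma Fin.intCast_injective {n : ℕ} : Function.Injective fun l : Fin n => (l : ℤ) :=
  Nat.cast_injective.comp Fin.val_injective

lemma Fin.sum_ite_intCast_eq_mul_extend {R : Type*} [NonUnitalNonAssocSemiring R] {n : ℕ}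
    (a : R) (f : Fin n → R) (z : ℤ) :
    ∑ l : Fin n, (if (l : ℤ) = z then a else 0) * f l =
      a * Function.extend (fun l : Fin n => (l : ℤ)) f 0 z := by
  by_cases hz : ∃ l : Fin n, (l : ℤ) = z
  · obtain ⟨l, rfl⟩ := hz
    rw [Fin.intCast_injective.extend_apply, Finset.sum_eq_single l]
    · simp
    · intro l' _ hl'
      simp [Fin.val_inj, hl']
    · simp
  · rw [Function.extend_apply' _ _ _ hz, Pi.zero_apply, mul_zero]
    exact Finset.sum_eq_zero fun l _ => by rw [if_neg fun h => hz ⟨l, h⟩, zero_mul]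

section Green

variable {m n : ℕ}

noncomputable def blockCol (g : Matrix (Fin n × Fin m) (Fin n × Fin m) ℂ) (j : Fin n) :
    ℤ → Matrix (Fin m) (Fin m) ℂ :=
  Function.extend (fun k : Fin n => (k : ℤ)) (fun k => blk g k j) 0

lemma blockCol_natCast (g : Matrix (Fin n × Fin m) (Fin n × Fin m) ℂ) (j k : Fin n) :
    blockCol g j k = blk g k j :=
  Fin.intCast_injective.extend_apply _ _ k

lemma blockCol_eq_zero (g : Matrix (Fin n × Fin m) (Fin n × Fin m) ℂ) (j : Fin n) {z : ℤ}
    (hz : z < 0 ∨ n ≤ z) : blockCol g j z = 0 :=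
  Function.extend_apply' _ _ _ fun ⟨k, hk⟩ => by omega

lemma blk_mul (M N : Matrix (Fin n × Fin m) (Fin n × Fin m) ℂ) (i j : Fin n) :
    blk (M * N) i j = ∑ l, blk M i l * blk N l j := by
  ext p q
  simp [blk, mul_apply, Fintype.sum_prod_type, Matrix.sum_apply]

lemma blk_one (i j : Fin n) :
    blk (1 : Matrix (Fin n × Fin m) (Fin n × Fin m) ℂ) i j = if i = j then 1 else 0 := by
  ext p q
  by_cases h : i = j <;> simp [blk, one_apply, h]

lemma blk_hopen_sub_smul (A B C : Fin n → Matrix (Fin m) (Fin m) ℂ) (E : ℂ) (k l : Fin n) :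
    blk (hopen A B C - E • 1) k l =
      (if (l : ℤ) = k - 1 then C k else 0) + (if (l : ℤ) = k then A k - E • 1 else 0) +
        (if (l : ℤ) = k + 1 then B k else 0) := by
  ext p q
  simp only [blk, hopen, Matrix.sub_apply, Matrix.smul_apply, one_apply, Matrix.add_apply,
    Prod.mk.injEq, Fin.ext_iff, ite_and]
  split_ifs <;> first | omega | simp [*, one_apply, Fin.ext_iff]

lemma blockTridiagApply_blockCol {A B C : Fin n → Matrix (Fin m) (Fin m) ℂ} {E : ℂ}
    {g : Matrix (Fin n × Fin m) (Fin n × Fin m) ℂ} (hg : (hopen A B C - E • 1) * g = 1)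
    (j k : Fin n) :
    blockTridiagApply A B C E (blockCol g j) k = if k = j then 1 else 0 := by
  have h := congrArg (fun M => blk M k j) hg
  simp only [blk_mul, blk_one, blk_hopen_sub_smul, add_mul, Finset.sum_add_distrib,
    Fin.sum_ite_intCast_eq_mul_extend] at h
  exact h

end Green

section Boundary

variable {m n : ℕ} {A B C : Fin n → Matrix (Fin m) (Fin m) ℂ} {E : ℂ}

lemma blockTridiagApply_fromCols {ι₁ ι₂ : Type*} (x : ℤ → Matrix (Fin m) ι₁ ℂ)
    (y : ℤ → Matrix (Fin m) ι₂ ℂ) (k : Fin n) :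
    blockTridiagApply A B C E (fun z => fromCols (x z) (y z)) k =
      fromCols (blockTridiagApply A B C E x k) (blockTridiagApply A B C E y k) := by
  ext i (j | j) <;> simp [blockTridiagApply]

lemma blockTridiagApply_update_neg_one {y : ℤ → Matrix (Fin m) (Fin m) ℂ} {j : Fin n}
    (hj : (j : ℤ) = 0) (hC : IsUnit (C j))
    (hy : ∀ k, blockTridiagApply A B C E y k = if k = j then 1 else 0) (k : Fin n) :
    blockTridiagApply A B C E (Function.update y (-1) (y (-1) - (C j)⁻¹)) k = 0 := by
  have hy := hy k
  unfold blockTridiagApply at hy ⊢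
  have hk₀ : (k : ℤ) ≠ -1 := by omega
  have hk₁ : (k : ℤ) + 1 ≠ -1 := by omega
  rw [Function.update_of_ne hk₀, Function.update_of_ne hk₁]
  by_cases hk : k = j
  · subst hk
    have hCC : C k * (C k)⁻¹ = 1 := mul_nonsing_inv _ ((isUnit_iff_isUnit_det _).mp hC)
    rw [if_pos rfl, ← sub_eq_zero] at hy
    rw [hj, zero_sub, Function.update_self, Matrix.mul_sub, hCC, ← hy, hj, zero_sub]
    abel
  · have : (k : ℤ) - 1 ≠ -1 := fun h => hk (Fin.ext (by omega))
    rw [Function.update_of_ne this]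
    rwa [if_neg hk] at hy

lemma blockTridiagApply_update_natCast {y : ℤ → Matrix (Fin m) (Fin m) ℂ} {j : Fin n}
    (hj : (j : ℤ) = n - 1) (hB : IsUnit (B j))
    (hy : ∀ k, blockTridiagApply A B C E y k = if k = j then 1 else 0) (k : Fin n) :
    blockTridiagApply A B C E (Function.update y n (y n - (B j)⁻¹)) k = 0 := by
  have hy := hy k
  unfold blockTridiagApply at hy ⊢
  have hk₀ : (k : ℤ) ≠ n := by omega
  have hk₁ : (k : ℤ) - 1 ≠ n := by omega
  rw [Function.update_of_ne hk₀, Function.update_of_ne hk₁]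
  by_cases hk : k = j
  · subst hk
    have hBB : B k * (B k)⁻¹ = 1 := mul_nonsing_inv _ ((isUnit_iff_isUnit_det _).mp hB)
    rw [if_pos rfl, ← sub_eq_zero] at hy
    rw [hj, sub_add_cancel, Function.update_self, Matrix.mul_sub, hBB, ← hy, hj, sub_add_cancel]
    abel
  · have : (k : ℤ) + 1 ≠ n := fun h => hk (Fin.ext (by omega))
    rw [Function.update_of_ne this]
    rwa [if_neg hk] at hy

end Boundary

/-- `[[0, -B_n⁻¹],[g_{n,1}, g_{n,n}]] = T(E) · [[g_{1,1}, g_{1,n}],[-C_1⁻¹, 0]]`,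
where `g(E) = (h - E·1)⁻¹`. -/
theorem stmt6 {n m : ℕ} (hn : 2 ≤ n)
    (A B C : Fin n → Matrix (Fin m) (Fin m) ℂ)
    (hB : ∀ k, IsUnit (B k)) (hC : ∀ k, IsUnit (C k)) (E : ℂ)
    (hE : IsUnit (hopen A B C - E • 1).det) :
    let g := (hopen A B C - E • 1)⁻¹
    Matrix.fromBlocks 0 (-(B ⟨n - 1, by omega⟩)⁻¹)
        (blk g ⟨n - 1, by omega⟩ ⟨0, by omega⟩) (blk g ⟨n - 1, by omega⟩ ⟨n - 1, by omega⟩) =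
      transfer A B C E *
        Matrix.fromBlocks (blk g ⟨0, by omega⟩ ⟨0, by omega⟩)
          (blk g ⟨0, by omega⟩ ⟨n - 1, by omega⟩) (-(C ⟨0, by omega⟩)⁻¹) 0 := by
  intro g
  have hg : (hopen A B C - E • 1) * g = 1 := mul_nonsing_inv _ hE
  set first : Fin n := ⟨0, by omega⟩
  set last : Fin n := ⟨n - 1, by omega⟩
  have hlast : (last : ℤ) = n - 1 := by simp [last]; omega
  set colFirst := Function.update (blockCol g first) (-1) (blockCol g first (-1) - (C first)⁻¹)
  set colLast := Function.update (blockCol g last) n (blockCol g last n - (B last)⁻¹)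
  have key := transfer_mul_fromRows hB (x := fun z => fromCols (colFirst z) (colLast z))
    fun k => by
      rw [blockTridiagApply_fromCols, blockTridiagApply_update_neg_one rfl (hC first)
        (blockTridiagApply_blockCol hg first), blockTridiagApply_update_natCast hlast (hB last)
        (blockTridiagApply_blockCol hg last), fromCols_zero]
  rw [fromRows_fromCols_eq_fromBlocks, fromRows_fromCols_eq_fromBlocks] at key
  convert key.symm using 3 <;> simp only [colFirst, colLast]
  · rw [Function.update_of_ne (by omega), blockCol_eq_zero _ _ (by omega)]
  · rw [Function.update_self, blockCol_eq_zero _ _ (by omega), zero_sub]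
  · rw [Function.update_of_ne (by omega), ← hlast, blockCol_natCast]
  · rw [Function.update_of_ne (by omega), ← hlast, blockCol_natCast]
  · rw [Function.update_of_ne (by omega)]
    exact (blockCol_natCast g _ first).symm
  · rw [Function.update_of_ne (by omega)]
    exact (blockCol_natCast g _ first).symm
  · rw [Function.update_self, blockCol_eq_zero _ _ (by omega), zero_sub]
  · rw [Function.update_of_ne (by omega), blockCol_eq_zero _ _ (by omega)]
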